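/- Let K(A,B) be the complete bipartite graph K(n,n) whose edges are colored with three colors (red, blue, green) so that every vertex has color degree 3. Let R be a red monochromatic connected component having the maximum number of vertices among all monochromatic components, with R1 = R ∩ A ≠ A and R2 = R ∩ B ≠ B, and set C = A − R1, D = B − R2 (so every edge between R1 and D and between R2 and C is blue or green). Suppose the vertex set of the induced complete bipartite graph K(C,D) cannot be partitioned into at most two vertex-disjoint monochromatic trees. Then every vertex of C ∪ D is incident with at least one red edge of K(C,D), and K(C,D) contains at least one blue edge and at least one green edge. -/

import Mathlib

/-!
Common definitions for edge-colored complete bipartite graphs.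

The complete bipartite graph `K(A,B)` with partite sets `α` and `β` is modeled on the
vertex type `α ⊕ β`; an edge-coloring with color type `γ` is a function `c : α → β → γ`
(giving the color of the edge between `a : α` and `b : β`).
-/

/-- The spanning subgraph of the complete bipartite graph on parts `α`, `β` consisting of
the edges of color `k`, under the edge-coloring `c`. -/
def biColorGraph {α β γ : Type*} (c : α → β → γ) (k : γ) : SimpleGraph (α ⊕ β) where
  Adj x y := (∃ a b, x = Sum.inl a ∧ y = Sum.inr b ∧ c a b = k) ∨
             (∃ a b, x = Sum.inr b ∧ y = Sum.inl a ∧ c a b = k)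
  symm := by
    constructor
    rintro x y (⟨a, b, hx, hy, hc⟩ | ⟨a, b, hx, hy, hc⟩)
    · exact Or.inr ⟨a, b, hy, hx, hc⟩
    · exact Or.inl ⟨a, b, hy, hx, hc⟩
  loopless := by
    constructor
    rintro x (⟨a, b, hx, hy, _⟩ | ⟨a, b, hx, hy, _⟩) <;> subst hx <;> simp at hy

/-- `S` is the vertex set of a monochromatic tree: it induces a connected subgraph in some
color class.  (A single vertex also counts as a monochromatic tree.) -/
def IsMonoTreeSet {α β γ : Type*} (c : α → β → γ) (S : Set (α ⊕ β)) : Prop :=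
  ∃ k, ((biColorGraph c k).induce S).Connected

/-- `P` is a partition of the vertex set of the complete bipartite graph into
(nonempty, pairwise vertex-disjoint) vertex sets of monochromatic trees. -/
def IsMonoTreePartition {α β γ : Type*} (c : α → β → γ) (P : Finset (Set (α ⊕ β))) : Prop :=
  (∀ S ∈ P, IsMonoTreeSet c S) ∧ ∀ x : α ⊕ β, ∃! S, S ∈ P ∧ x ∈ S

/-- The vertex set can be partitioned into at most `m` vertex-disjoint monochromatic trees. -/
def HasMonoTreePartition {α β γ : Type*} (c : α → β → γ) (m : ℕ) : Prop :=
  ∃ P : Finset (Set (α ⊕ β)), IsMonoTreePartition c P ∧ P.card ≤ m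

/-- Every vertex has color degree 3, i.e. all three colors appear on its incident edges. -/
def ColorDegreeThree {α β : Type*} (c : α → β → Fin 3) : Prop :=
  (∀ (a : α) (k : Fin 3), ∃ b, c a b = k) ∧ ∀ (b : β) (k : Fin 3), ∃ a, c a b = k

/-! For 2-edge-colorings we use `Bool` as the color type: `true` = blue, `false` = green. -/

/-- The vertices of `α` all of whose incident edges are blue. -/
def XA {α β : Type*} (c : α → β → Bool) : Set α := {a | ∀ b, c a b = true}

/-- The vertices of `α` all of whose incident edges are green. -/
def YA {α β : Type*} (c : α → β → Bool) : Set α := {a | ∀ b, c a b = false}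

/-- The vertices of `β` all of whose incident edges are blue. -/
def XB {α β : Type*} (c : α → β → Bool) : Set β := {b | ∀ a, c a b = true}

/-- The vertices of `β` all of whose incident edges are green. -/
def YB {α β : Type*} (c : α → β → Bool) : Set β := {b | ∀ a, c a b = false}

/-- `S`-type graph: `X(G) ≠ ∅` and `Y(G) ≠ ∅`. -/
def IsSType {α β : Type*} (c : α → β → Bool) : Prop :=
  ((XA c).Nonempty ∨ (XB c).Nonempty) ∧ ((YA c).Nonempty ∨ (YB c).Nonempty)

/-- `M`-type graph: there are partitions `A = A1 ∪ A1ᶜ`, `B = B1 ∪ B1ᶜ` with all four parts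
nonempty such that `K(A1,B1)` and `K(A1ᶜ,B1ᶜ)` are blue and `K(A1,B1ᶜ)`, `K(A1ᶜ,B1)`
are green. -/
def IsMType {α β : Type*} (c : α → β → Bool) : Prop :=
  ∃ (A1 : Set α) (B1 : Set β),
    A1.Nonempty ∧ A1ᶜ.Nonempty ∧ B1.Nonempty ∧ B1ᶜ.Nonempty ∧
    (∀ a ∈ A1, ∀ b ∈ B1, c a b = true) ∧
    (∀ a ∈ A1ᶜ, ∀ b ∈ B1ᶜ, c a b = true) ∧
    (∀ a ∈ A1, ∀ b ∈ B1ᶜ, c a b = false) ∧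
    (∀ a ∈ A1ᶜ, ∀ b ∈ B1, c a b = false)

/-- For a subset `Bi ⊆ B`, the set `b(Bi) ⊆ A` of vertices sending blue edges to all of `Bi`
and green edges to all of `Biᶜ`.  (Thus `b(B̄i) = bsetA c Biᶜ`.) -/
def bsetA {α β : Type*} (c : α → β → Bool) (Bi : Set β) : Set α :=
  {a | (∀ b ∈ Bi, c a b = true) ∧ ∀ b ∈ Biᶜ, c a b = false}

/-- For a subset `Ai ⊆ A`, the set `b(Ai) ⊆ B` of vertices sending blue edges to all of `Ai`
and green edges to all of `Aiᶜ`. -/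
def bsetB {α β : Type*} (c : α → β → Bool) (Ai : Set α) : Set β :=
  {b | (∀ a ∈ Ai, c a b = true) ∧ ∀ a ∈ Aiᶜ, c a b = false}

/-- `S1*`-type graph with `X(G) ∪ Y(G) ⊆ A`: `|B| = 1`, `|A1| ≥ 2` and `|A3| ≥ 2`
(where `A1 = X(G)`, `A3 = Y(G)`). -/
def IsS1StarA {α β : Type*} [Fintype β] (c : α → β → Bool) : Prop :=
  Fintype.card β = 1 ∧ 2 ≤ (XA c).ncard ∧ 2 ≤ (YA c).ncard

/-- `S1'`-type graph with `X(G) ∪ Y(G) ⊆ A`: `|A1| ≥ 2`, `|A3| ≥ 2`, `|B| ≥ 2`, and for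
every partition `B = Bi ∪ B̄i` into nonempty parts, `b(Bi) ≠ ∅` and `b(B̄i) ≠ ∅`. -/
def IsS1PrimeA {α β : Type*} [Fintype β] (c : α → β → Bool) : Prop :=
  2 ≤ (XA c).ncard ∧ 2 ≤ (YA c).ncard ∧ 2 ≤ Fintype.card β ∧
  ∀ Bi : Set β, Bi.Nonempty → Biᶜ.Nonempty →
    (bsetA c Bi).Nonempty ∧ (bsetA c Biᶜ).Nonempty

/-- `S1*`-type graph with `X(G) ∪ Y(G) ⊆ B`. -/
def IsS1StarB {α β : Type*} [Fintype α] (c : α → β → Bool) : Prop :=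
  Fintype.card α = 1 ∧ 2 ≤ (XB c).ncard ∧ 2 ≤ (YB c).ncard

/-- `S1'`-type graph with `X(G) ∪ Y(G) ⊆ B`. -/
def IsS1PrimeB {α β : Type*} [Fintype α] (c : α → β → Bool) : Prop :=
  2 ≤ (XB c).ncard ∧ 2 ≤ (YB c).ncard ∧ 2 ≤ Fintype.card α ∧
  ∀ Ai : Set α, Ai.Nonempty → Aiᶜ.Nonempty →
    (bsetB c Ai).Nonempty ∧ (bsetB c Aiᶜ).Nonempty

/-- `S1`-type graph: `S1*`-type or `S1'`-type. -/
def IsS1 {α β : Type*} [Fintype α] [Fintype β] (c : α → β → Bool) : Prop :=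
  IsS1StarA c ∨ IsS1PrimeA c ∨ IsS1StarB c ∨ IsS1PrimeB c

/-- `S2`-type graph: an `S`-type graph that is not `S1`-type. -/
def IsS2 {α β : Type*} [Fintype α] [Fintype β] (c : α → β → Bool) : Prop :=
  IsSType c ∧ ¬ IsS1 c

/-!
A red component is closed under red edges, so the red neighbour of a vertex outside `R` lies
outside `R`: every vertex of `K(C,D)` keeps a red edge. If `K(C,D)` had no blue (or no green)
edge, it would be colored red and `g` only with every vertex on a red edge, and such a graph
splits into at most two monochromatic trees: either a vertex is red to the whole other side
(red spanning tree), or the `g`-graph is connected, or a `g`-component `S` sends only red edges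
to its complement, so that `(S ∩ A) ∪ (B \ S)` and `(A \ S) ∪ (S ∩ B)` span complete red
bipartite graphs.
-/

open SimpleGraph

section TwoColors

variable {α β γ : Type*} {c : α → β → γ} {k : γ}

@[simp]
theorem biColorGraph_adj_inl_inr {a : α} {b : β} :
    (biColorGraph c k).Adj (.inl a) (.inr b) ↔ c a b = k := by
  simp [biColorGraph]

theorem HasMonoTreePartition.mono {m m' : ℕ} (h : HasMonoTreePartition c m) (hm : m ≤ m') :
    HasMonoTreePartition c m' :=
  let ⟨P, hP, hcard⟩ := h
  ⟨P, hP, hcard.trans hm⟩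

theorem hasMonoTreePartition_of_isEmpty [IsEmpty (α ⊕ β)] (m : ℕ) :
    HasMonoTreePartition c m :=
  ⟨∅, ⟨by simp, isEmptyElim⟩, by simp⟩

theorem hasMonoTreePartition_one_of_connected (h : (biColorGraph c k).Connected) :
    HasMonoTreePartition c 1 :=
  ⟨{Set.univ}, ⟨by simpa using ⟨k, (induceUnivIso _).connected_iff.2 h⟩,
    fun x => ⟨Set.univ, by simp, by simp⟩⟩, by simp⟩

theorem hasMonoTreePartition_two_of_compl {S : Set (α ⊕ β)} (hS : IsMonoTreeSet c S)
    (hSc : IsMonoTreeSet c Sᶜ) : HasMonoTreePartition c 2 := by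
  refine ⟨{S, Sᶜ}, ⟨by simp [hS, hSc], fun x => ?_⟩, Finset.card_le_two⟩
  by_cases hx : x ∈ S
  · exact ⟨S, by simp [hx], by rintro T ⟨hT, hxT⟩; grind⟩
  · exact ⟨Sᶜ, by simp [hx], by rintro T ⟨hT, hxT⟩; grind⟩

theorem connected_biColorGraph_of_forall_inl (a₀ : α) (ha₀ : ∀ b, c a₀ b = k)
    (hα : ∀ a, ∃ b, c a b = k) : (biColorGraph c k).Connected := by
  refine (connected_iff_exists_forall_reachable _).2 ⟨.inl a₀, ?_⟩
  rintro (a | b)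
  · obtain ⟨b, hb⟩ := hα a
    exact (biColorGraph_adj_inl_inr.2 (ha₀ b)).reachable.trans
      (biColorGraph_adj_inl_inr.2 hb).symm.reachable
  · exact (biColorGraph_adj_inl_inr.2 (ha₀ b)).reachable

theorem connected_biColorGraph_of_forall_inr (b₀ : β) (hb₀ : ∀ a, c a b₀ = k)
    (hβ : ∀ b, ∃ a, c a b = k) : (biColorGraph c k).Connected := by
  refine (connected_iff_exists_forall_reachable _).2 ⟨.inr b₀, ?_⟩
  rintro (a | b)
  · exact (biColorGraph_adj_inl_inr.2 (hb₀ a)).symm.reachable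
  · obtain ⟨a, ha⟩ := hβ b
    exact (biColorGraph_adj_inl_inr.2 (hb₀ a)).symm.reachable.trans
      (biColorGraph_adj_inl_inr.2 ha).reachable

theorem connected_induce_biColorGraph {T : Set (α ⊕ β)} (hα : ∃ a, .inl a ∈ T)
    (hβ : ∃ b, .inr b ∈ T) (hk : ∀ a b, .inl a ∈ T → .inr b ∈ T → c a b = k) :
    ((biColorGraph c k).induce T).Connected := by
  obtain ⟨a₀, ha₀⟩ := hα
  obtain ⟨b₀, hb₀⟩ := hβ
  refine (connected_iff_exists_forall_reachable _).2 ⟨⟨.inl a₀, ha₀⟩, ?_⟩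
  have hadj : ∀ a b (ha : .inl a ∈ T) (hb : .inr b ∈ T),
      ((biColorGraph c k).induce T).Adj ⟨_, ha⟩ ⟨_, hb⟩ :=
    fun a b ha hb => induce_adj.2 (biColorGraph_adj_inl_inr.2 (hk a b ha hb))
  rintro ⟨a | b, hx⟩
  · exact (hadj _ _ ha₀ hb₀).reachable.trans (hadj _ _ hx hb₀).symm.reachable
  · exact (hadj _ _ ha₀ hx).reachable

theorem exists_inl_inr_mem_of_adj_iff {S : Set (α ⊕ β)}
    (hS : ∀ x y, (biColorGraph c k).Adj x y → (x ∈ S ↔ y ∈ S))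
    (hα : ∀ a, ∃ b, c a b = k) (hβ : ∀ b, ∃ a, c a b = k) (hne : S.Nonempty) :
    (∃ a, .inl a ∈ S) ∧ ∃ b, .inr b ∈ S := by
  obtain ⟨a | b, hx⟩ := hne
  · obtain ⟨b, hb⟩ := hα a
    exact ⟨⟨a, hx⟩, b, (hS _ _ (biColorGraph_adj_inl_inr.2 hb)).1 hx⟩
  · obtain ⟨a, ha⟩ := hβ b
    exact ⟨⟨a, (hS _ _ (biColorGraph_adj_inl_inr.2 ha)).2 hx⟩, b, hx⟩

variable {r g : γ}

theorem isMonoTreeSet_setOf_mem_iff_isLeft (hc : ∀ a b, c a b = r ∨ c a b = g)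
    {S : Set (α ⊕ β)} (hS : ∀ x y, (biColorGraph c g).Adj x y → (x ∈ S ↔ y ∈ S))
    (hα : ∃ a, .inl a ∈ S) (hβ : ∃ b, .inr b ∉ S) :
    IsMonoTreeSet c {x | x ∈ S ↔ x.isLeft} := by
  refine ⟨r, connected_induce_biColorGraph (by simpa using hα) (by simpa using hβ) ?_⟩
  intro a b ha hb
  simp only [Set.mem_ofPred_eq, Sum.isLeft_inl, Sum.isLeft_inr, Bool.false_eq_true, iff_true,
    iff_false] at ha hb
  exact (hc a b).resolve_right fun h => hb ((hS _ _ (biColorGraph_adj_inl_inr.2 h)).1 ha)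

theorem hasMonoTreePartition_two_of_adj_iff (hc : ∀ a b, c a b = r ∨ c a b = g)
    (hgα : ∀ a, ∃ b, c a b = g) (hgβ : ∀ b, ∃ a, c a b = g) {S : Set (α ⊕ β)}
    (hS : ∀ x y, (biColorGraph c g).Adj x y → (x ∈ S ↔ y ∈ S))
    (hne : S.Nonempty) (hne' : Sᶜ.Nonempty) :
    HasMonoTreePartition c 2 := by
  have hSc : ∀ x y, (biColorGraph c g).Adj x y → (x ∈ Sᶜ ↔ y ∈ Sᶜ) :=
    fun x y h => not_congr (hS x y h)
  obtain ⟨hSα, hSβ⟩ := exists_inl_inr_mem_of_adj_iff hS hgα hgβ hne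
  obtain ⟨hScα, hScβ⟩ := exists_inl_inr_mem_of_adj_iff hSc hgα hgβ hne'
  have hcompl : {x | x ∈ S ↔ x.isLeft}ᶜ = {x | x ∈ Sᶜ ↔ x.isLeft} := by
    ext
    simp only [Set.mem_compl_iff, Set.mem_ofPred_eq, not_iff]
  refine hasMonoTreePartition_two_of_compl (isMonoTreeSet_setOf_mem_iff_isLeft hc hS hSα hScβ) ?_
  rw [hcompl]
  exact isMonoTreeSet_setOf_mem_iff_isLeft hc hSc hScα (by simpa using hSβ)

theorem hasMonoTreePartition_two_of_two_colors (hc : ∀ a b, c a b = r ∨ c a b = g)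
    (hα : ∀ a, ∃ b, c a b = r) (hβ : ∀ b, ∃ a, c a b = r) :
    HasMonoTreePartition c 2 := by
  rcases isEmpty_or_nonempty (α ⊕ β) with hV | ⟨⟨x₀⟩⟩
  · exact hasMonoTreePartition_of_isEmpty 2
  by_cases hhub : (∃ a, ∀ b, c a b = r) ∨ ∃ b, ∀ a, c a b = r
  · refine (hasMonoTreePartition_one_of_connected (k := r) ?_).mono one_le_two
    rcases hhub with ⟨a, ha⟩ | ⟨b, hb⟩
    exacts [connected_biColorGraph_of_forall_inl a ha hα,
      connected_biColorGraph_of_forall_inr b hb hβ]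
  push Not at hhub
  by_cases hconn : (biColorGraph c g).Connected
  · exact (hasMonoTreePartition_one_of_connected hconn).mono one_le_two
  obtain ⟨y, hy⟩ : ∃ y, ¬ (biColorGraph c g).Reachable x₀ y := by
    by_contra! h
    exact hconn ((connected_iff_exists_forall_reachable _).2 ⟨x₀, h⟩)
  exact hasMonoTreePartition_two_of_adj_iff hc
    (fun a => (hhub.1 a).imp fun b => (hc a b).resolve_left)
    (fun b => (hhub.2 b).imp fun a => (hc a b).resolve_left)
    (fun _ _ => ConnectedComponent.mem_supp_congr_adj _) ⟨x₀, rfl⟩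
    ⟨y, fun h => hy (ConnectedComponent.exact h).symm⟩

end TwoColors

/-- Colors: `0` = red, `1` = blue, `2` = green. -/
theorem claim_red_edges_and_both_colors_general {n : ℕ} (c : Fin n → Fin n → Fin 3)
    (hdeg : ColorDegreeThree c)
    (R : (biColorGraph c 0).ConnectedComponent)
    (C D : Set (Fin n))
    (hC : C = {a : Fin n | Sum.inl a ∈ R.supp}ᶜ)
    (hD : D = {b : Fin n | Sum.inr b ∈ R.supp}ᶜ)
    (hCD : ¬ HasMonoTreePartition (fun (a : C) (b : D) => c a.1 b.1) 2) :
    ((∀ a : C, ∃ b : D, c a.1 b.1 = 0) ∧ (∀ b : D, ∃ a : C, c a.1 b.1 = 0)) ∧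
    (∃ (a : C) (b : D), c a.1 b.1 = 1) ∧ (∃ (a : C) (b : D), c a.1 b.1 = 2) := by
  have hred : (∀ a : C, ∃ b : D, c a.1 b.1 = 0) ∧ ∀ b : D, ∃ a : C, c a.1 b.1 = 0 := by
    subst hC hD
    refine ⟨fun ⟨a, ha⟩ => ?_, fun ⟨b, hb⟩ => ?_⟩
    · obtain ⟨b, hab⟩ := hdeg.1 a 0
      have hR := R.mem_supp_congr_adj (biColorGraph_adj_inl_inr.2 hab)
      exact ⟨⟨b, fun hb => ha (hR.2 hb)⟩, hab⟩
    · obtain ⟨a, hab⟩ := hdeg.2 b 0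
      have hR := R.mem_supp_congr_adj (biColorGraph_adj_inl_inr.2 hab)
      exact ⟨⟨a, fun ha => hb (hR.1 ha)⟩, hab⟩
  refine ⟨hred, ?_, ?_⟩ <;> by_contra! h <;> apply hCD
  · refine hasMonoTreePartition_two_of_two_colors (g := 2) (fun a b => ?_) hred.1 hred.2
    have := h a b
    omega
  · refine hasMonoTreePartition_two_of_two_colors (g := 1) (fun a b => ?_) hred.1 hred.2
    have := h a b
    omega

/-- **Claim 1.** Colors: `0` = red, `1` = blue, `2` = green.
Let `K(n,n)` be 3-edge-colored with every vertex of color degree 3, let `R` be a red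
monochromatic component of maximum order among all monochromatic components, with
`R1 = R ∩ A ≠ A`, `R2 = R ∩ B ≠ B`, and let `C = A - R1`, `D = B - R2`.  If the vertex set
of `K(C,D)` cannot be partitioned into at most two vertex-disjoint monochromatic trees,
then every vertex of `C ∪ D` is incident with a red edge of `K(C,D)`, and `K(C,D)` has at
least one blue edge and at least one green edge. -/
theorem claim_red_edges_and_both_colors {n : ℕ} (c : Fin n → Fin n → Fin 3)
    (hdeg : ColorDegreeThree c)
    (R : (biColorGraph c 0).ConnectedComponent)
    (hmax : ∀ (k : Fin 3) (Q : (biColorGraph c k).ConnectedComponent),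
      Q.supp.ncard ≤ R.supp.ncard)
    (hR1 : {a : Fin n | Sum.inl a ∈ R.supp} ≠ Set.univ)
    (hR2 : {b : Fin n | Sum.inr b ∈ R.supp} ≠ Set.univ)
    (C D : Set (Fin n))
    (hC : C = {a : Fin n | Sum.inl a ∈ R.supp}ᶜ)
    (hD : D = {b : Fin n | Sum.inr b ∈ R.supp}ᶜ)
    (hCD : ¬ HasMonoTreePartition (fun (a : C) (b : D) => c a.1 b.1) 2) :
    ((∀ a : C, ∃ b : D, c a.1 b.1 = 0) ∧ (∀ b : D, ∃ a : C, c a.1 b.1 = 0)) ∧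
    (∃ (a : C) (b : D), c a.1 b.1 = 1) ∧ (∃ (a : C) (b : D), c a.1 b.1 = 2) :=
  claim_red_edges_and_both_colors_general c hdeg R C D hC hD hCD
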